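/- Let Φ be an irreducible reduced root system with base Π and J ⊆ Π with the relative root system Φ_J = π(Φ)∖{0} of rank ≥ 2, where π is the projection modulo ⟨Π∖J⟩. Let α̃ be the maximal relative root. Then for any positive relative root α ∈ Φ_J⁺ there exist simple relative roots α₁, …, α_n such that every partial sum α + α₁ + ⋯ + α_i is a relative root and α + α₁ + ⋯ + α_n = α̃. -/

import Mathlib

open scoped RealInnerProductSpace

/-- A reduced root system `Φ` with a fixed base (system of simple roots) `base`
in a real inner product space. -/
structure RootSystemData (V : Type) [NormedAddCommGroup V] [InnerProductSpace ℝ V] where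
  Φ : Set V
  base : Finset V
  finite : Φ.Finite
  zero_notMem : (0:V) ∉ Φ
  neg_mem : ∀ a ∈ Φ, -a ∈ Φ
  reduced : ∀ a ∈ Φ, ∀ t : ℝ, t • a ∈ Φ → t = 1 ∨ t = -1
  reflect_mem : ∀ a ∈ Φ, ∀ b ∈ Φ, b - (2 * (inner ℝ a b : ℝ) / (inner ℝ a a : ℝ)) • a ∈ Φ
  cartan_int : ∀ a ∈ Φ, ∀ b ∈ Φ, ∃ n : ℤ, 2 * (inner ℝ a b : ℝ) / (inner ℝ a a : ℝ) = (n : ℝ)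
  base_sub : ↑base ⊆ Φ
  base_indep : LinearIndependent ℝ (fun b : base => (b : V))
  base_gen : ∀ a ∈ Φ,
    (∃ c : V → ℕ, a = ∑ b ∈ base, c b • b) ∨ (∃ c : V → ℕ, -a = ∑ b ∈ base, c b • b)

namespace RootSystemData

variable {V : Type} [NormedAddCommGroup V] [InnerProductSpace ℝ V] (RS : RootSystemData V)

/-- `a` is a nonnegative integral combination of the simple roots. -/
def IsPos (a : V) : Prop := ∃ c : V → ℕ, a = ∑ b ∈ RS.base, c b • b

/-- The quotient space `V / ⟨Π ∖ J⟩`, ambient space of the relative roots. -/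
abbrev Qspace (J : Finset V) : Type :=
  V ⧸ Submodule.span ℝ ((RS.base : Set V) \ (J : Set V))

/-- The canonical projection `π : V → V / ⟨Π ∖ J⟩`. -/
def proj (J : Finset V) : V →ₗ[ℝ] RS.Qspace J :=
  Submodule.mkQ _

/-- The set of relative roots `Φ_J = π(Φ) ∖ {0}`. -/
def relRoots (J : Finset V) : Set (RS.Qspace J) := (RS.proj J '' RS.Φ) \ {0}

/-- `β` is a simple relative root: a nonzero image of a simple root in `J`. -/
def IsSimpleRel (J : Finset V) (β : RS.Qspace J) : Prop :=
  β ≠ 0 ∧ ∃ b ∈ J, β = RS.proj J b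

/-- `β` is a positive relative root: a relative root that is a nonnegative
integral combination of the simple relative roots. -/
def IsPosRel (J : Finset V) (β : RS.Qspace J) : Prop :=
  β ∈ RS.relRoots J ∧ ∃ c : V → ℕ, β = ∑ b ∈ J, c b • RS.proj J b

/-- `a` is maximal in `S` with respect to the base `Π`. -/
def IsMaximalIn (S : Set V) (a : V) : Prop := a ∈ S ∧ ∀ b ∈ RS.base, a + b ∉ S

/-- `a` is minimal in `S` with respect to the base `Π`. -/
def IsMinimalIn (S : Set V) (a : V) : Prop := a ∈ S ∧ ∀ b ∈ RS.base, a - b ∉ S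

/-- `a` is the highest root: every root is obtained from it by subtracting a
nonnegative combination of simple roots. -/
def IsHighest (a : V) : Prop :=
  a ∈ RS.Φ ∧ ∀ b ∈ RS.Φ, ∃ c : V → ℕ, a - b = ∑ x ∈ RS.base, c x • x

/-- `S` is an irreducible component of `Φ`: a nonempty subset orthogonal to its
complement admitting no further nontrivial orthogonal splitting. -/
def IsComponent (S : Set V) : Prop :=
  S ⊆ RS.Φ ∧ S.Nonempty ∧ (∀ a ∈ S, ∀ b ∈ RS.Φ \ S, (inner ℝ a b : ℝ) = 0) ∧
    ∀ T ⊆ S, T.Nonempty → (∀ a ∈ T, ∀ b ∈ RS.Φ \ T, (inner ℝ a b : ℝ) = 0) → T = S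

/-- The root system is irreducible. -/
def Irred : Prop := RS.IsComponent RS.Φ

end RootSystemData

/-! Write `α = π a` for a root `a`, so that `ã - a` is a sum `d` of simple roots. As `⟪d, d⟫ > 0`,
some simple root `x` occurring in `d` has `⟪x, d⟫ > 0`, hence `⟪x, a⟫ < 0` or `⟪x, ã⟫ > 0`, and
then `a + x` or `ã - x` is a root. Either move shortens `d`, and after projecting it adds the
simple relative root `π x` (or nothing, when `x ∉ J`). The relative roots met along the way stay
nonzero because the cone spanned by the simple relative roots is pointed: a linear functional
taking the value `1` on every simple relative root is `≥ 1` on its nonzero elements. -/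

open Relation

section AddChain

variable {M : Type*} [AddCommMonoid M]

def AddStep (R S : Set M) (β γ : M) : Prop := γ ∈ R ∧ ∃ s ∈ S, γ = β + s

theorem exists_partialSums_of_reflTransGen {R S : Set M} {β γ : M} (hβ : β ∈ R)
    (h : ReflTransGen (AddStep R S) β γ) :
    ∃ (n : ℕ) (f : ℕ → M), (∀ t < n, f t ∈ S) ∧
      (∀ i ≤ n, β + ∑ t ∈ Finset.range i, f t ∈ R) ∧ β + ∑ t ∈ Finset.range n, f t = γ := by
  induction h with
  | refl => exact ⟨0, 0, by simp, fun i hi => by simpa [Nat.le_zero.mp hi], by simp⟩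
  | tail _ hstep ih =>
    obtain ⟨n, f, hS, hR, hsum⟩ := ih
    obtain ⟨hγR, s, hs, rfl⟩ := hstep
    have hprefix : ∀ i ≤ n, ∑ t ∈ Finset.range i, Function.update f n s t =
        ∑ t ∈ Finset.range i, f t := fun i hi =>
      Finset.sum_congr rfl fun t ht =>
        Function.update_of_ne (Finset.mem_range.mp ht |>.trans_le hi).ne _ _
    have hlast : ∑ t ∈ Finset.range (n + 1), Function.update f n s t =
        ∑ t ∈ Finset.range n, f t + s := by
      rw [Finset.sum_range_succ, hprefix n le_rfl, Function.update_self]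
    refine ⟨n + 1, Function.update f n s, fun t ht => ?_, fun i hi => ?_, ?_⟩
    · rcases (Nat.lt_succ_iff.mp ht).lt_or_eq with ht | rfl
      · rw [Function.update_of_ne ht.ne]; exact hS t ht
      · rwa [Function.update_self]
    · rcases (Nat.le_succ_iff.mp hi) with hi | rfl
      · rw [hprefix i hi]; exact hR i hi
      · rwa [hlast, ← add_assoc, hsum]
    · rw [hlast, ← add_assoc, hsum]

end AddChain

theorem Multiset.exists_sum_eq_sum_nsmul {α : Type*} [AddCommMonoid α] (s : Finset α)
    (c : α → ℕ) : ∃ m : Multiset α, (∀ y ∈ m, y ∈ s) ∧ m.sum = ∑ y ∈ s, c y • y := by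
  refine ⟨∑ y ∈ s, Multiset.replicate (c y) y, fun y hy => ?_, ?_⟩
  · obtain ⟨_, _, hy⟩ := Multiset.mem_sum.mp hy
    rwa [Multiset.eq_of_mem_replicate hy]
  · simp [Multiset.sum_sum, Multiset.sum_replicate]

theorem exists_mem_inner_sum_pos {E : Type*} [NormedAddCommGroup E] [InnerProductSpace ℝ E]
    {m : Multiset E} (hm : m.sum ≠ 0) : ∃ x ∈ m, 0 < ⟪x, m.sum⟫ := by
  by_contra! h
  have hsum : ∀ v : E, ⟪m.sum, v⟫ = (m.map (⟪·, v⟫)).sum := fun v =>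
    Multiset.induction_on m (by simp) fun x m ih => by simp [inner_add_left, ih]
  have : ⟪m.sum, m.sum⟫ ≤ 0 := by
    rw [hsum]
    refine (Multiset.sum_le_card_nsmul _ 0 fun r hr => ?_).trans (nsmul_zero _).le
    obtain ⟨x, hx, rfl⟩ := Multiset.mem_map.mp hr
    exact h x hx
  exact hm (real_inner_self_nonpos.mp this)

namespace RootSystemData

variable {V : Type} [NormedAddCommGroup V] [InnerProductSpace ℝ V] (RS : RootSystemData V)

theorem ne_zero_of_mem {a : V} (ha : a ∈ RS.Φ) : a ≠ 0 :=
  fun h => RS.zero_notMem (h ▸ ha)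

theorem eq_or_eq_neg_of_eq_smul {a b : V} (ha : a ∈ RS.Φ) (hb : b ∈ RS.Φ) {r : ℝ}
    (hr : b = r • a) : b = a ∨ b = -a := by
  subst hr
  rcases RS.reduced a ha r hb with rfl | rfl
  · exact Or.inl (one_smul ℝ a)
  · exact Or.inr (neg_one_smul ℝ a)

/-- For non-proportional roots the two Cartan integers have product `< 4`, so one of them is
`1` when `⟪a, b⟫ > 0`; the corresponding reflection yields `±(a - b)`. -/
theorem sub_mem_of_inner_pos {a b : V} (ha : a ∈ RS.Φ) (hb : b ∈ RS.Φ) (hpos : 0 < ⟪a, b⟫)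
    (hne : a ≠ b) : a - b ∈ RS.Φ := by
  have ha0 := RS.ne_zero_of_mem ha
  have hA := real_inner_self_pos.mpr ha0
  have hB := real_inner_self_pos.mpr (RS.ne_zero_of_mem hb)
  have hlt : ⟪a, b⟫ < ‖a‖ * ‖b‖ := inner_lt_norm_mul_iff_real.mpr fun h => by
    have hba : b = (‖a‖⁻¹ * ‖b‖) • a := by
      rw [mul_smul, h, inv_smul_smul₀ (norm_ne_zero_iff.mpr ha0)]
    rcases RS.eq_or_eq_neg_of_eq_smul ha hb hba with rfl | rfl
    · exact hne rfl
    · rw [inner_neg_right] at hpos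
      linarith
  have hCS : ⟪a, b⟫ * ⟪a, b⟫ < ⟪a, a⟫ * ⟪b, b⟫ := by
    rw [real_inner_self_eq_norm_mul_norm, real_inner_self_eq_norm_mul_norm]
    nlinarith [mul_self_lt_mul_self hpos.le hlt]
  obtain ⟨p, hp⟩ := RS.cartan_int a ha b hb
  obtain ⟨q, hq⟩ := RS.cartan_int b hb a ha
  rw [real_inner_comm] at hq
  have hp0 : 0 < p := by exact_mod_cast (hp ▸ by positivity : (0 : ℝ) < p)
  have hq0 : 0 < q := by exact_mod_cast (hq ▸ by positivity : (0 : ℝ) < q)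
  have hpq : p * q < 4 := by
    have : (p : ℝ) * q < 4 := by
      rw [← hp, ← hq, div_mul_div_comm, div_lt_iff₀ (mul_pos hA hB)]
      nlinarith
    exact_mod_cast this
  have hpq1 : p = 1 ∨ q = 1 := by
    by_contra! h
    nlinarith [(by omega : 2 ≤ p), (by omega : 2 ≤ q)]
  rcases hpq1 with rfl | rfl
  · simpa only [hp, Int.cast_one, one_smul, neg_sub] using RS.neg_mem _ (RS.reflect_mem a ha b hb)
  · simpa only [real_inner_comm, hq, Int.cast_one, one_smul] using RS.reflect_mem b hb a ha

theorem add_mem_of_inner_neg {a b : V} (ha : a ∈ RS.Φ) (hb : b ∈ RS.Φ) (hneg : ⟪a, b⟫ < 0)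
    (hne : a ≠ -b) : a + b ∈ RS.Φ := by
  simpa using RS.sub_mem_of_inner_pos ha (RS.neg_mem b hb) (by simpa [inner_neg_right]) hne

theorem proj_eq_zero_of_mem_sdiff {J : Finset V} {x : V} (hx : x ∈ RS.base) (hxJ : x ∉ J) :
    RS.proj J x = 0 :=
  (Submodule.Quotient.mk_eq_zero _).mpr (Submodule.subset_span ⟨hx, hxJ⟩)

theorem exists_relHeight {J : Finset V} (hJ : J ⊆ RS.base) :
    ∃ h : RS.Qspace J →ₗ[ℝ] ℝ, ∀ b ∈ J, h (RS.proj J b) = 1 := by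
  classical
  let B := Module.Basis.span RS.base_indep
  let φ : RS.base → ℝ := fun b => if (b : V) ∈ J then 1 else 0
  obtain ⟨g, hg⟩ := LinearMap.exists_extend (B.constr ℝ φ)
  have hg_base : ∀ b (hb : b ∈ RS.base), g b = if b ∈ J then 1 else 0 := fun b hb => by
    have := B.constr_basis ℝ φ ⟨b, hb⟩
    rwa [← hg, Module.Basis.span_apply] at this
  have hker : Submodule.span ℝ ((RS.base : Set V) \ J) ≤ LinearMap.ker g :=
    Submodule.span_le.mpr fun b ⟨hb, hbJ⟩ => by simpa [hg_base b hb] using hbJ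
  exact ⟨Submodule.liftQ _ g hker, fun b hb => by
    simp [proj, hg_base b (hJ hb), hb]⟩

theorem proj_ne_zero_of_mem {J : Finset V} (hJ : J ⊆ RS.base) {x : V} (hx : x ∈ J) :
    RS.proj J x ≠ 0 := by
  obtain ⟨h, hh⟩ := RS.exists_relHeight hJ
  intro h0
  simpa [h0] using hh x hx

/-- Generated by `π Π`, hence by the simple relative roots, as `π` kills `Π ∖ J`. -/
def relCone (J : Finset V) : AddSubmonoid (RS.Qspace J) :=
  AddSubmonoid.closure (RS.proj J '' RS.base)

theorem proj_mem_relCone {J : Finset V} {x : V} (hx : x ∈ RS.base) : RS.proj J x ∈ RS.relCone J :=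
  AddSubmonoid.subset_closure ⟨x, hx, rfl⟩

theorem proj_sum_mem_relCone {J : Finset V} {m : Multiset V} (hm : ∀ y ∈ m, y ∈ RS.base) :
    RS.proj J m.sum ∈ RS.relCone J := by
  rw [map_multiset_sum]
  exact AddSubmonoid.multiset_sum_mem _ _ fun β hβ => by
    obtain ⟨y, hy, rfl⟩ := Multiset.mem_map.mp hβ
    exact RS.proj_mem_relCone (hm y hy)

theorem sum_mem_relCone {J : Finset V} (hJ : J ⊆ RS.base) (c : V → ℕ) :
    ∑ b ∈ J, c b • RS.proj J b ∈ RS.relCone J :=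
  AddSubmonoid.sum_mem _ fun _ hb => AddSubmonoid.nsmul_mem _ (RS.proj_mem_relCone (hJ hb)) _

theorem eq_zero_or_one_le_of_mem_relCone {J : Finset V} {h : RS.Qspace J →ₗ[ℝ] ℝ}
    (hh : ∀ b ∈ J, h (RS.proj J b) = 1) {δ : RS.Qspace J} (hδ : δ ∈ RS.relCone J) :
    δ = 0 ∨ 1 ≤ h δ := by
  induction hδ using AddSubmonoid.closure_induction with
  | mem δ hδ =>
    obtain ⟨x, hx, rfl⟩ := hδ
    by_cases hxJ : x ∈ J
    · exact Or.inr (hh x hxJ).ge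
    · exact Or.inl (RS.proj_eq_zero_of_mem_sdiff hx hxJ)
  | zero => exact Or.inl rfl
  | add δ ε _ _ hδ hε =>
    rcases hδ with rfl | hδ
    · simpa using hε
    rcases hε with rfl | hε
    · simpa using Or.inr hδ
    · exact Or.inr (by rw [map_add]; linarith)

theorem add_ne_zero_of_mem_relCone {J : Finset V} (hJ : J ⊆ RS.base) {β γ : RS.Qspace J}
    (hβ : β ∈ RS.relCone J) (hγ : γ ∈ RS.relCone J) (hβ0 : β ≠ 0) : β + γ ≠ 0 := by
  obtain ⟨h, hh⟩ := RS.exists_relHeight hJ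
  have hβ1 := (RS.eq_zero_or_one_le_of_mem_relCone hh hβ).resolve_left hβ0
  have hγ0 : 0 ≤ h γ := (RS.eq_zero_or_one_le_of_mem_relCone hh hγ).elim
    (fun hγ => by simp [hγ]) fun hγ => by linarith
  intro hsum
  have := congrArg h hsum
  rw [map_add, map_zero] at this
  linarith

def RelStep (J : Finset V) : RS.Qspace J → RS.Qspace J → Prop :=
  AddStep (RS.relRoots J) {s | RS.IsSimpleRel J s}

theorem reflTransGen_relStep_proj_add {J : Finset V} (hJ : J ⊆ RS.base) {b x : V}
    (hx : x ∈ RS.base) (hb : b + x ∈ RS.Φ) (hne : RS.proj J (b + x) ≠ 0) :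
    ReflTransGen (RS.RelStep J) (RS.proj J b) (RS.proj J (b + x)) := by
  by_cases hxJ : x ∈ J
  · exact .single ⟨⟨⟨_, hb, rfl⟩, hne⟩, RS.proj J x,
      ⟨RS.proj_ne_zero_of_mem hJ hxJ, x, hxJ, rfl⟩, map_add _ _ _⟩
  · rw [map_add, RS.proj_eq_zero_of_mem_sdiff hx hxJ, add_zero]

theorem reflTransGen_relStep_of_eq_add_sum {J : Finset V} (hJ : J ⊆ RS.base) {a e : V}
    (m : Multiset V) (hm : ∀ y ∈ m, y ∈ RS.base) (ha : a ∈ RS.Φ) (he : e ∈ RS.Φ)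
    (hae : e = a + m.sum) (hcone : RS.proj J a ∈ RS.relCone J) (hne : RS.proj J a ≠ 0) :
    ReflTransGen (RS.RelStep J) (RS.proj J a) (RS.proj J e) := by
  classical
  by_cases hm0 : m.sum = 0
  · rw [hae, hm0, add_zero]
  obtain ⟨x, hxm, hx⟩ := exists_mem_inner_sum_pos hm0
  have hxb := hm x hxm
  have hxcone : RS.proj J x ∈ RS.relCone J := RS.proj_mem_relCone hxb
  have hsplit : m.sum = x + (m.erase x).sum := (Multiset.sum_erase hxm).symm
  have hrest : ∀ y ∈ m.erase x, y ∈ RS.base := fun y hy => hm y (Multiset.mem_of_mem_erase hy)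
  have hdec : (m.erase x).card < m.card := Multiset.card_erase_lt_of_mem hxm
  have hinner : ⟪x, a⟫ < 0 ∨ 0 < ⟪x, e⟫ := by
    by_contra! h
    rw [hae, inner_add_right] at h
    linarith [h.1, h.2]
  rcases hinner with hxa | hxe
  · have hne' : RS.proj J (a + x) ≠ 0 := by
      rw [map_add]
      exact RS.add_ne_zero_of_mem_relCone hJ hcone hxcone hne
    have hax : a + x ∈ RS.Φ := RS.add_mem_of_inner_neg ha (RS.base_sub hxb)
      (by rwa [real_inner_comm]) fun h => hne' (by rw [h, neg_add_cancel, map_zero])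
    exact (RS.reflTransGen_relStep_proj_add hJ hxb hax hne').trans
      (reflTransGen_relStep_of_eq_add_sum hJ (m.erase x) hrest hax he
        (by rw [hae, hsplit, add_assoc]) (by rw [map_add]; exact add_mem hcone hxcone) hne')
  · have hne_e : RS.proj J e ≠ 0 := by
      rw [hae, map_add]
      exact RS.add_ne_zero_of_mem_relCone hJ hcone (RS.proj_sum_mem_relCone hm) hne
    have hex : e - x ∈ RS.Φ := RS.sub_mem_of_inner_pos he (RS.base_sub hxb)
      (by rwa [real_inner_comm]) fun h => by
        rw [hae, hsplit, add_left_comm, add_eq_left] at h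
        exact RS.add_ne_zero_of_mem_relCone hJ hcone (RS.proj_sum_mem_relCone hrest) hne
          (by rw [← map_add, h, map_zero])
    have hstep := RS.reflTransGen_relStep_proj_add hJ hxb (b := e - x)
      (by rwa [sub_add_cancel]) (by rwa [sub_add_cancel])
    rw [sub_add_cancel] at hstep
    exact (reflTransGen_relStep_of_eq_add_sum hJ (m.erase x) hrest ha hex
      (by rw [hae, hsplit]; abel) hcone hne).trans hstep
termination_by m.card

end RootSystemData

open RootSystemData in
theorem stmt6_general {V : Type} [NormedAddCommGroup V] [InnerProductSpace ℝ V]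
    (RS : RootSystemData V)
    (J : Finset V) (hJ : J ⊆ RS.base)
    (atil : V) (hatil : RS.IsHighest atil)
    (α : RS.Qspace J) (hα : RS.IsPosRel J α) :
    ∃ (n : ℕ) (f : ℕ → RS.Qspace J),
      (∀ t < n, RS.IsSimpleRel J (f t)) ∧
      (∀ i ≤ n, α + ∑ t ∈ Finset.range i, f t ∈ RS.relRoots J) ∧
      α + ∑ t ∈ Finset.range n, f t = RS.proj J atil := by
  obtain ⟨hαroot, c, hc⟩ := hα
  obtain ⟨⟨a, ha, rfl⟩, hα0⟩ := id hαroot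
  obtain ⟨d, hd⟩ := hatil.2 a ha
  obtain ⟨m, hm, hsum⟩ := Multiset.exists_sum_eq_sum_nsmul RS.base d
  exact exists_partialSums_of_reflTransGen hαroot
    (RS.reflTransGen_relStep_of_eq_add_sum hJ m hm ha hatil.1 (by rw [hsum, ← hd]; abel)
      (hc ▸ RS.sum_mem_relCone hJ c) hα0)

open RootSystemData in
theorem stmt6 {V : Type} [NormedAddCommGroup V] [InnerProductSpace ℝ V]
    (RS : RootSystemData V) (hirr : RS.Irred)
    (J : Finset V) (hJ : J ⊆ RS.base) (hrank : 2 ≤ J.card)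
    (atil : V) (hatil : RS.IsHighest atil)
    (α : RS.Qspace J) (hα : RS.IsPosRel J α) :
    ∃ (n : ℕ) (f : ℕ → RS.Qspace J),
      (∀ t < n, RS.IsSimpleRel J (f t)) ∧
      (∀ i ≤ n, α + ∑ t ∈ Finset.range i, f t ∈ RS.relRoots J) ∧
      α + ∑ t ∈ Finset.range n, f t = RS.proj J atil :=
  stmt6_general RS J hJ atil hatil α hα
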